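/- There exist unique elements a₂, a₃, b₃, a₄, h₁, h₃ ∈ R such that, setting U₋₂ = λ⁻¹·diag(−a₂, a₂), U₋₃ = a₃·λ⁻¹·E₁₂ + b₃·λ⁻²·E₂₁, and U₋₄ = λ⁻²·diag(−a₄, a₄), the following hold: (i) [U₋₂, Λ] − (h₁/2)·λ⁻¹·Λ = −u⁽⁰⁾·E₁₂; (ii) [U₋₃, Λ] = ∂ₓU₋₂, where ∂ₓ is applied coefficientwise to the matrix entries; (iii) ω(U₋₃, λΛ) = 0; (iv) [U₋₄, Λ] + (1/2)·[U₋₂, [U₋₂, Λ]] − ∂ₓU₋₃ − (h₁/2)·[U₋₂, λ⁻¹Λ] − (h₃/2)·λ⁻²·Λ = 0. Moreover, for this unique solution, h₁ = u⁽⁰⁾ and h₃ = (u⁽⁰⁾)²/4 + u⁽²⁾/12. -/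

import Mathlib

/-!
Setup of Example 5.1 of the paper: `R = ℂ[u⁽⁰⁾, u⁽¹⁾, u⁽²⁾, …]` is the
differential polynomial ring of the KdV variable (formalized as
`MvPolynomial ℕ ℂ`, with `u⁽ᵐ⁾ = X m`), with the derivation `∂ₓ : u⁽ᵐ⁾ ↦ u⁽ᵐ⁺¹⁾`;
`2×2` matrices over `R[λ,λ⁻¹]` with commutator bracket; `Λ = λE₁₂ + E₂₁` (so
`Λ² = λI`); and the cocycle `ω(X,Y) = Res_λ tr((dX/dλ)·Y) ∈ R`.
-/

open LaurentPolynomial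

noncomputable section

/-- The differential polynomial ring `R = ℂ[u⁽⁰⁾, u⁽¹⁾, …]`. -/
abbrev DP := MvPolynomial ℕ ℂ

/-- The derivation `∂ₓ` with `∂ₓ(u⁽ᵐ⁾) = u⁽ᵐ⁺¹⁾`. -/
noncomputable def dx : Derivation ℂ DP DP :=
  MvPolynomial.mkDerivation ℂ fun n => MvPolynomial.X (n + 1)

/-- `∂ₓ` applied coefficientwise to Laurent polynomials. -/
noncomputable def DXl (f : LaurentPolynomial DP) : LaurentPolynomial DP :=
  AddMonoidAlgebra.ofCoeff (Finsupp.mapRange (fun a => dx a) (by simp) f.coeff)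

/-- The formal derivative `d/dλ` on `R[λ,λ⁻¹]`. -/
noncomputable def lderivR (f : LaurentPolynomial DP) : LaurentPolynomial DP :=
  Finsupp.sum f.coeff fun n a => (n : ℤ) • (LaurentPolynomial.C a * T (n - 1))

/-- The residue: the coefficient of `λ⁻¹`. -/
noncomputable def resR (f : LaurentPolynomial DP) : DP := f.coeff (-1)

/-- The cocycle `ω(X,Y) = Res_λ tr((dX/dλ)·Y) ∈ R`. -/
noncomputable def omegaR (X Y : Matrix (Fin 2) (Fin 2) (LaurentPolynomial DP)) : DP :=
  resR (Matrix.trace ((X.map lderivR) * Y))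

/-- Matrix units. -/
noncomputable def Eu (i j : Fin 2) : Matrix (Fin 2) (Fin 2) (LaurentPolynomial DP) :=
  Matrix.single i j 1

/-- `Λ = λE₁₂ + E₂₁`. -/
noncomputable def Lam : Matrix (Fin 2) (Fin 2) (LaurentPolynomial DP) :=
  (T 1 : LaurentPolynomial DP) • Eu 0 1 + Eu 1 0

/-- Matrix commutator. -/
noncomputable def mCom (A B : Matrix (Fin 2) (Fin 2) (LaurentPolynomial DP)) :
    Matrix (Fin 2) (Fin 2) (LaurentPolynomial DP) := A * B - B * A

/-- `U₋₂ = λ⁻¹·diag(-a₂, a₂)`. -/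
noncomputable def Um2 (a₂ : DP) : Matrix (Fin 2) (Fin 2) (LaurentPolynomial DP) :=
  Matrix.diagonal ![-(LaurentPolynomial.C a₂ * T (-1)), LaurentPolynomial.C a₂ * T (-1)]

/-- `U₋₃ = a₃·λ⁻¹·E₁₂ + b₃·λ⁻²·E₂₁`. -/
noncomputable def Um3 (a₃ b₃ : DP) : Matrix (Fin 2) (Fin 2) (LaurentPolynomial DP) :=
  (LaurentPolynomial.C a₃ * T (-1)) • Eu 0 1 + (LaurentPolynomial.C b₃ * T (-2)) • Eu 1 0

/-- `U₋₄ = λ⁻²·diag(-a₄, a₄)`. -/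
noncomputable def Um4 (a₄ : DP) : Matrix (Fin 2) (Fin 2) (LaurentPolynomial DP) :=
  Matrix.diagonal ![-(LaurentPolynomial.C a₄ * T (-2)), LaurentPolynomial.C a₄ * T (-2)]

/-- `1/2 ∈ R`. -/
noncomputable def halfR : DP := MvPolynomial.C (2⁻¹ : ℂ)

/-- The system of graded equations (i)–(iv) of Example 5.1 of the paper. -/
def kdvSystem (a₂ a₃ b₃ a₄ h₁ h₃ : DP) : Prop :=
  (mCom (Um2 a₂) Lam - (LaurentPolynomial.C (halfR * h₁) * T (-1)) • Lam
      = -(LaurentPolynomial.C (MvPolynomial.X 0 : DP) • Eu 0 1)) ∧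
  (mCom (Um3 a₃ b₃) Lam = (Um2 a₂).map DXl) ∧
  (omegaR (Um3 a₃ b₃) ((T 1 : LaurentPolynomial DP) • Lam) = 0) ∧
  (mCom (Um4 a₄) Lam
      + LaurentPolynomial.C halfR • mCom (Um2 a₂) (mCom (Um2 a₂) Lam)
      - (Um3 a₃ b₃).map DXl
      - LaurentPolynomial.C (halfR * h₁) • mCom (Um2 a₂) ((T (-1) : LaurentPolynomial DP) • Lam)
      - (LaurentPolynomial.C (halfR * h₃) * T (-2)) • Lam
      = 0)

/-!
All matrices occurring in the graded equations have monomial entries `c λⁿ`, so each equation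
amounts to a few coefficient identities in `R`, and these form a triangular linear system:
(i) gives `h₁ = u⁽⁰⁾` and `a₂ = u⁽⁰⁾/4`; (ii) together with the normalization (iii) gives
`b₃ = u⁽¹⁾/12` and `a₃ = -u⁽¹⁾/6`; the two off-diagonal entries of (iv) then give
`h₃ = 4 a₂² - ∂ₓ(a₃ + b₃)` and `a₄`.
-/

open AddMonoidAlgebra

theorem DXl_single (n : ℤ) (a : DP) : DXl (single n a) = single n (dx a) :=
  congrArg ofCoeff Finsupp.mapRange_single

theorem DXl_zero : DXl 0 = 0 :=
  congrArg ofCoeff Finsupp.mapRange_zero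

theorem lderivR_single (n : ℤ) (a : DP) : lderivR (single n a) = single (n - 1) (n • a) := by
  rw [lderivR, coeff_single, Finsupp.sum_single_index (by simp), single_eq_C_mul_T, map_zsmul,
    smul_mul_assoc]

theorem lderivR_zero : lderivR 0 = 0 :=
  Finsupp.sum_zero_index

theorem resR_single (n : ℤ) (a : DP) : resR (single n a) = if n = -1 then a else 0 :=
  Finsupp.single_apply

theorem dx_algebraMap_mul_X (c : ℂ) (n : ℕ) :
    dx (algebraMap ℂ DP c * MvPolynomial.X n) = algebraMap ℂ DP c * MvPolynomial.X (n + 1) := by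
  rw [← Algebra.smul_def, ← Algebra.smul_def, Derivation.map_smul, dx, MvPolynomial.mkDerivation_X]

theorem Lam_eq : Lam = !![0, T 1; 1, 0] := by
  ext i j : 1; fin_cases i <;> fin_cases j <;> simp [Lam, Eu]

theorem Um2_eq (a : DP) : Um2 a = !![single (-1) (-a), 0; 0, single (-1) a] := by
  simp [Um2, Matrix.diagonal_fin_two, ← single_eq_C_mul_T]

theorem Um3_eq (a b : DP) : Um3 a b = !![0, single (-1) a; single (-2) b, 0] := by
  ext i j : 1; fin_cases i <;> fin_cases j <;> simp [Um3, Eu, ← single_eq_C_mul_T]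

theorem Um4_eq (a : DP) : Um4 a = !![single (-2) (-a), 0; 0, single (-2) a] := by
  simp [Um4, Matrix.diagonal_fin_two, ← single_eq_C_mul_T]

-- Entries are kept in the form `single n c = c λⁿ`, against the simp direction of
-- `single_eq_C_mul_T`, so that monomials of equal degree merge under `← single_add`/`← single_sub`.
theorem kdv_eq_i_iff (a₂ h₁ : DP) :
    mCom (Um2 a₂) Lam - (C (halfR * h₁) * T (-1)) • Lam = -(C (MvPolynomial.X 0 : DP) • Eu 0 1) ↔
      -a₂ - a₂ - halfR * h₁ = -MvPolynomial.X 0 ∧ a₂ + a₂ - halfR * h₁ = 0 := by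
  rw [← Matrix.ext_iff]
  simp [Fin.forall_fin_two, mCom, Lam_eq, Um2_eq, Eu, T, ← single_eq_C, -single_eq_C_mul_T,
    ← single_neg, -single_add, ← single_sub]

theorem kdv_eq_ii_iff (a₂ a₃ b₃ : DP) :
    mCom (Um3 a₃ b₃) Lam = (Um2 a₂).map DXl ↔ a₃ - b₃ = -dx a₂ ∧ b₃ - a₃ = dx a₂ := by
  rw [← Matrix.ext_iff]
  simp [Fin.forall_fin_two, mCom, Lam_eq, Um2_eq, Um3_eq, T, -single_eq_C_mul_T, -single_neg,
    -single_add, ← single_sub, DXl_single, DXl_zero]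

theorem kdv_eq_iii_iff (a₃ b₃ : DP) :
    omegaR (Um3 a₃ b₃) ((T 1 : LaurentPolynomial DP) • Lam) = 0 ↔ -a₃ + -(2 * b₃) = 0 := by
  simp [omegaR, Matrix.trace_fin_two, Matrix.mul_apply, Fin.sum_univ_two, Lam_eq, Um3_eq, T,
    -single_eq_C_mul_T, -single_neg, ← single_add, -single_sub, lderivR_single, lderivR_zero,
    resR_single]

theorem kdv_eq_iv_iff (a₂ a₃ b₃ a₄ h₁ h₃ : DP) :
    mCom (Um4 a₄) Lam
      + C halfR • mCom (Um2 a₂) (mCom (Um2 a₂) Lam)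
      - (Um3 a₃ b₃).map DXl
      - C (halfR * h₁) • mCom (Um2 a₂) ((T (-1) : LaurentPolynomial DP) • Lam)
      - (C (halfR * h₃) * T (-2)) • Lam = 0 ↔
      -a₄ - a₄ + halfR * (-(a₂ * (-a₂ - a₂)) - (-a₂ - a₂) * a₂) - dx a₃
          - halfR * h₁ * (-a₂ - a₂) - halfR * h₃ = 0 ∧
        a₄ + a₄ + halfR * (a₂ * (a₂ + a₂) + (a₂ + a₂) * a₂) - dx b₃
          - halfR * h₁ * (a₂ + a₂) - halfR * h₃ = 0 := by
  rw [← Matrix.ext_iff]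
  simp [Fin.forall_fin_two, mCom, Lam_eq, Um2_eq, Um3_eq, Um4_eq, T, ← single_eq_C,
    -single_eq_C_mul_T, -single_neg, ← single_add, ← single_sub, DXl_single, DXl_zero]

def kdvSolution : DP × DP × DP × DP × DP × DP :=
  (MvPolynomial.C (4⁻¹ : ℂ) * MvPolynomial.X 0,
    -(MvPolynomial.C (6⁻¹ : ℂ) * MvPolynomial.X 1),
    MvPolynomial.C (12⁻¹ : ℂ) * MvPolynomial.X 1,
    MvPolynomial.C (16⁻¹ : ℂ) * MvPolynomial.X 2 + MvPolynomial.C (8⁻¹ : ℂ) * MvPolynomial.X 0 ^ 2,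
    MvPolynomial.X 0,
    MvPolynomial.C (4⁻¹ : ℂ) * MvPolynomial.X 0 ^ 2 + MvPolynomial.C (12⁻¹ : ℂ) * MvPolynomial.X 2)

theorem kdvSystem_kdvSolution :
    kdvSystem kdvSolution.1 kdvSolution.2.1 kdvSolution.2.2.1 kdvSolution.2.2.2.1
      kdvSolution.2.2.2.2.1 kdvSolution.2.2.2.2.2 := by
  rw [kdvSystem, kdv_eq_i_iff, kdv_eq_ii_iff, kdv_eq_iii_iff, kdv_eq_iv_iff]
  -- `algebra` only treats scalars written as `algebraMap ℂ DP c` as constants, not `C c`.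
  simp only [kdvSolution, halfR, ← MvPolynomial.algebraMap_eq, map_neg, dx_algebraMap_mul_X]
  refine ⟨⟨?_, ?_⟩, ⟨?_, ?_⟩, ?_, ?_, ?_⟩ <;> algebra

theorem eq_kdvSolution_of_kdvSystem {a₂ a₃ b₃ a₄ h₁ h₃ : DP}
    (h : kdvSystem a₂ a₃ b₃ a₄ h₁ h₃) : (a₂, a₃, b₃, a₄, h₁, h₃) = kdvSolution := by
  rw [kdvSystem, kdv_eq_i_iff, kdv_eq_ii_iff, kdv_eq_iii_iff, kdv_eq_iv_iff] at h
  obtain ⟨⟨e₁, e₂⟩, ⟨e₃, -⟩, e₄, e₅, e₆⟩ := h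
  simp only [kdvSolution, halfR, ← MvPolynomial.algebraMap_eq, Prod.mk.injEq] at *
  have ha₂ : a₂ = algebraMap ℂ DP 4⁻¹ * MvPolynomial.X 0 := by
    linear_combination (norm := algebra) algebraMap ℂ DP (-4⁻¹) * (e₁ - e₂)
  have hh₁ : h₁ = MvPolynomial.X 0 := by linear_combination (norm := algebra) -e₁ - e₂
  subst ha₂ hh₁
  rw [dx_algebraMap_mul_X] at e₃
  have hb₃ : b₃ = algebraMap ℂ DP 12⁻¹ * MvPolynomial.X 1 := by
    linear_combination (norm := algebra) algebraMap ℂ DP (-3⁻¹) * (e₃ + e₄)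
  have ha₃ : a₃ = -(algebraMap ℂ DP 6⁻¹ * MvPolynomial.X 1) := by
    linear_combination (norm := algebra) -e₄ - 2 * hb₃
  subst hb₃ ha₃
  simp only [map_neg, dx_algebraMap_mul_X] at e₅ e₆
  refine ⟨rfl, rfl, rfl, ?_, rfl, ?_⟩
  · linear_combination (norm := algebra) algebraMap ℂ DP 4⁻¹ * (e₆ - e₅)
  · linear_combination (norm := algebra) -(e₅ + e₆)

/-- There exist unique `a₂, a₃, b₃, a₄, h₁, h₃ ∈ R` solving the graded equations
(i)–(iv); moreover, for this unique solution `h₁ = u⁽⁰⁾` and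
`h₃ = (u⁽⁰⁾)²/4 + u⁽²⁾/12`. -/
theorem kdv_hamiltonian_densities :
    (∃! x : DP × DP × DP × DP × DP × DP,
      kdvSystem x.1 x.2.1 x.2.2.1 x.2.2.2.1 x.2.2.2.2.1 x.2.2.2.2.2) ∧
    (∀ a₂ a₃ b₃ a₄ h₁ h₃ : DP, kdvSystem a₂ a₃ b₃ a₄ h₁ h₃ →
      h₁ = MvPolynomial.X 0 ∧
      h₃ = MvPolynomial.C (4⁻¹ : ℂ) * (MvPolynomial.X 0) ^ 2
        + MvPolynomial.C (12⁻¹ : ℂ) * MvPolynomial.X 2) := by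
  refine ⟨⟨kdvSolution, kdvSystem_kdvSolution, fun x hx => eq_kdvSolution_of_kdvSystem hx⟩,
    fun a₂ a₃ b₃ a₄ h₁ h₃ h => ?_⟩
  have hsol := eq_kdvSolution_of_kdvSystem h
  simp only [kdvSolution, Prod.mk.injEq] at hsol
  exact hsol.2.2.2.2
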